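/- arXiv:2511.17371 — 2 statements merged into one kernel-verified Lean document; each statement's English description precedes it below -/
import Mathlib

section
/- In the symplectic group Sp(2n,ℂ) defined by the antidiagonal symplectic form M_{2n}, let P_I be the standard maximal parabolic corresponding to an isotropic subspace of dimension l (1 ≤ l ≤ n). For an element M_{a,b,c,d} of P_I with Levi data a ∈ GL(l,ℂ) and d ∈ Sp(2n-2l,ℂ), the determinant of the adjoint action of M_{a,b,c,d} on Lie(Sp(2n,ℂ))/Lie(P_I) equals det(a)^{-(2n-2l)}·det(d)^{l}·det(a)^{-(l+1)}. In particular, when l = n (the Lagrangian case) it equals det(a)^{-(n+1)}. -/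
open Matrix

/-- The `l × l` antidiagonal identity matrix `K_l`. -/
noncomputable def Kmat (l : ℕ) : Matrix (Fin l) (Fin l) ℂ :=
  fun i j => if (i : ℕ) + (j : ℕ) = l - 1 then 1 else 0

/-- The `m × m` antidiagonal symplectic form `M_m = ((0, K_{m/2}), (-K_{m/2}, 0))`
(for even `m`), written entrywise: the antidiagonal entries are `1` in the top half and
`-1` in the bottom half. -/
noncomputable def Mmat (m : ℕ) : Matrix (Fin m) (Fin m) ℂ :=
  fun i j => if (i : ℕ) + (j : ℕ) = m - 1 then (if 2 * (i : ℕ) < m then 1 else -1) else 0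

/-- The subspace `W = {B ∈ Mat(l×l, ℂ) : K_l B = Bᵀ K_l}` of dimension `l(l+1)/2`. -/
noncomputable def Wsub (l : ℕ) : Submodule ℂ (Matrix (Fin l) (Fin l) ℂ) where
  carrier := {B | Kmat l * B = Bᵀ * Kmat l}
  add_mem' := by
    intro a b ha hb
    simp only [Set.mem_setOf_eq] at *
    rw [Matrix.mul_add, Matrix.transpose_add, Matrix.add_mul, ha, hb]
  zero_mem' := by simp
  smul_mem' := by
    intro c a ha
    simp only [Set.mem_setOf_eq] at *
    rw [Matrix.mul_smul, Matrix.transpose_smul, Matrix.smul_mul, ha]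

/-!
The action is block upper triangular for `Mat × W`, so its determinant is the product of the
determinants of the two diagonal blocks. Under vectorisation the block `D ↦ d D a⁻¹` becomes the
Kronecker product `a⁻ᵀ ⊗ d`. Left multiplication by `K_l` identifies `W` with the symmetric
matrices and turns the other block into the congruence `S ↦ cᵀ S c`, `c = a⁻¹`. Its determinant
`det c ^ (l + 1)` is multiplicative in `c`, so it suffices to check it on diagonal matrices
(the coordinates `S i j`, `i ≤ j`, are eigenvectors with eigenvalues `δ i δ j`) and on
transvections (the congruence is then unipotent).
-/

open scoped Kronecker

theorem LinearMap.det_one_add_of_isNilpotent {R M : Type*} [CommRing R] [IsDomain R]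
    [AddCommGroup M] [Module R M] [Module.Free R M] [Module.Finite R M]
    {N : M →ₗ[R] M} (hN : IsNilpotent N) : (1 + N).det = 1 := by
  have h := LinearMap.eval_charpoly (-N) 1
  rw [hN.neg.charpoly_eq_X_pow_finrank] at h
  simpa using h.symm

theorem LinearMap.det_eq_mul_of_snd_comp_inl_eq_zero {K M N : Type*} [Field K]
    [AddCommGroup M] [Module K M] [FiniteDimensional K M]
    [AddCommGroup N] [Module K N] [FiniteDimensional K N]
    (f : M × N →ₗ[K] M × N) (hf : snd K M N ∘ₗ f ∘ₗ inl K M N = 0) :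
    f.det = (fst K M N ∘ₗ f ∘ₗ inl K M N).det * (snd K M N ∘ₗ f ∘ₗ inr K M N).det := by
  set g := fst K M N ∘ₗ f ∘ₗ inl K M N
  set k := snd K M N ∘ₗ f ∘ₗ inr K M N
  set u := inl K M N ∘ₗ fst K M N ∘ₗ f ∘ₗ inr K M N ∘ₗ snd K M N
  have hfac : f = prodMap id k ∘ₗ (1 + u) ∘ₗ prodMap g id := by
    refine prod_ext (LinearMap.ext fun x => ?_) (LinearMap.ext fun y => ?_)
    · have hx : (f (x, 0)).2 = 0 := LinearMap.congr_fun hf x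
      ext <;> simp [g, k, u, hx, Prod.mk_zero_zero]
    · ext <;> simp [g, k, u, Prod.mk_zero_zero]
  have hu : IsNilpotent u := ⟨2, LinearMap.ext fun x => by simp [u, sq, Prod.mk_zero_zero]⟩
  rw [hfac, det_comp, det_comp, det_prodMap, det_prodMap, det_one_add_of_isNilpotent hu]
  simp [mul_comm]

theorem card_filter_le_add_card_filter_ge {ι : Type*} [Fintype ι] [LinearOrder ι] (i : ι) :
    (Finset.univ.filter (i ≤ ·)).card + (Finset.univ.filter (· ≤ i)).card
      = Fintype.card ι + 1 := by
  rw [← Finset.card_union_add_card_inter, ← Finset.filter_or, ← Finset.filter_and,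
    Finset.filter_true_of_mem fun j _ => le_total i j, Finset.card_univ]
  simp only [← le_antisymm_iff, Finset.filter_eq, Finset.mem_univ, if_true, Finset.card_singleton]

theorem prod_subtype_le_mul_eq_pow {ι M : Type*} [Fintype ι] [LinearOrder ι] [CommMonoid M]
    (δ : ι → M) :
    ∏ p : {p : ι × ι // p.1 ≤ p.2}, δ p.1.1 * δ p.1.2 = (∏ i, δ i) ^ (Fintype.card ι + 1) := by
  rw [← Finset.prod_subtype (Finset.univ.filter fun p : ι × ι => p.1 ≤ p.2) (by simp)
      (fun p => δ p.1 * δ p.2),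
    Finset.prod_mul_distrib, Finset.prod_filter, Finset.prod_filter, ← Finset.univ_product_univ,
    Finset.prod_product, Finset.prod_product_right]
  simp only [← Finset.prod_filter, Finset.prod_const]
  rw [← Finset.prod_mul_distrib, ← Finset.prod_pow]
  refine Finset.prod_congr rfl fun i _ => ?_
  rw [← pow_add, card_filter_le_add_card_filter_ge]

namespace Matrix

section MulLeftRight

variable {m n R : Type*} [Fintype m] [Fintype n] [CommRing R]

def vecLinearEquiv : Matrix m n R ≃ₗ[R] (n × m → R) where
  toFun := vec
  invFun v := of fun i j => v (j, i)
  map_add' := vec_add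
  map_smul' := vec_smul
  left_inv _ := rfl
  right_inv _ := rfl

def mulLeftRight (P : Matrix m m R) (Q : Matrix n n R) : Matrix m n R →ₗ[R] Matrix m n R where
  toFun X := P * X * Q
  map_add' X Y := by rw [Matrix.mul_add, Matrix.add_mul]
  map_smul' c X := by rw [Matrix.mul_smul, Matrix.smul_mul, RingHom.id_apply]

theorem det_mulLeftRight [DecidableEq m] [DecidableEq n] (P : Matrix m m R) (Q : Matrix n n R) :
    (mulLeftRight P Q).det = P.det ^ Fintype.card n * Q.det ^ Fintype.card m := by
  have hconj : (vecLinearEquiv : Matrix m n R ≃ₗ[R] _).toLinearMap ∘ₗ mulLeftRight P Q ∘ₗ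
      vecLinearEquiv.symm.toLinearMap = toLin' (Qᵀ ⊗ₖ P) := by
    refine LinearMap.ext fun v => ?_
    have := kronecker_mulVec_vec P (vecLinearEquiv.symm v) Qᵀ
    rw [transpose_transpose] at this
    exact this.symm
  rw [← LinearMap.det_conj _ vecLinearEquiv, hconj, LinearMap.det_toLin', det_kronecker,
    det_transpose, mul_comm]

end MulLeftRight

section Symmetric

variable {ι K : Type*} [Field K]

variable (ι K) in
def symmetricMatrices : Submodule K (Matrix ι ι K) where
  carrier := {S | S.IsSymm}
  add_mem' := IsSymm.add
  zero_mem' := isSymm_zero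
  smul_mem' c _ hS := hS.smul c

variable [Fintype ι]

def symmetricCongr (c : Matrix ι ι K) : symmetricMatrices ι K →ₗ[K] symmetricMatrices ι K :=
  (mulLeftRight cᵀ c).restrict fun S (hS : Sᵀ = S) => by
    change (cᵀ * S * c)ᵀ = cᵀ * S * c
    rw [transpose_mul, transpose_mul, transpose_transpose, hS, Matrix.mul_assoc]

theorem coe_symmetricCongr (c : Matrix ι ι K) (S : symmetricMatrices ι K) :
    (symmetricCongr c S : Matrix ι ι K) = cᵀ * S * c :=
  rfl

theorem symmetricCongr_mul (A B : Matrix ι ι K) :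
    symmetricCongr (A * B) = symmetricCongr B ∘ₗ symmetricCongr A := by
  ext S : 2
  simp only [coe_symmetricCongr, LinearMap.comp_apply, transpose_mul, Matrix.mul_assoc]

theorem det_symmetricCongr_transvection [DecidableEq ι] (t : TransvectionStruct ι K) :
    (symmetricCongr t.toMatrix).det = 1 := by
  set E := single t.i t.j t.c
  have hE : E * E = 0 := single_mul_single_of_ne _ _ _ _ t.hij.symm _
  have hEE : ∀ X : Matrix ι ι K, X * E * E = 0 := fun X => by
    rw [Matrix.mul_assoc, hE, Matrix.mul_zero]
  have hEtEt : Eᵀ * Eᵀ = 0 := by rw [← transpose_mul, hE, transpose_zero]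
  set N := symmetricCongr t.toMatrix - 1
  have hN : ∀ S, (N S : Matrix ι ι K) = Eᵀ * S + S * E + Eᵀ * S * E := fun S => by
    simp only [N, LinearMap.sub_apply, Submodule.coe_sub, coe_symmetricCongr,
      TransvectionStruct.toMatrix, transvection, transpose_add, transpose_one, Module.End.one_apply]
    noncomm_ring
  -- each term of `N³ S` contains `E * E` or `Eᵀ * Eᵀ`
  have hN3 : N ^ 3 = 0 := LinearMap.ext fun S => Subtype.ext <| by
    simp only [pow_succ, pow_zero, one_mul, Module.End.mul_apply, hN, Matrix.mul_add,
      Matrix.add_mul, ← Matrix.mul_assoc, hEE, hEtEt, Matrix.zero_mul, Matrix.mul_zero, add_zero,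
      LinearMap.zero_apply, ZeroMemClass.coe_zero]
  rw [← add_sub_cancel 1 (symmetricCongr t.toMatrix), LinearMap.det_one_add_of_isNilpotent ⟨3, hN3⟩]

variable [LinearOrder ι]

def symmetricMatrices.upperCoords :
    symmetricMatrices ι K ≃ₗ[K] ({p : ι × ι // p.1 ≤ p.2} → K) where
  toFun S p := (S : Matrix ι ι K) p.1.1 p.1.2
  invFun v := ⟨of fun i j => if h : i ≤ j then v ⟨(i, j), h⟩ else v ⟨(j, i), le_of_not_ge h⟩, by
    refine IsSymm.ext fun i j => ?_
    rcases lt_trichotomy i j with hij | rfl | hij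
    · simp [hij.le, hij.not_ge]
    · rfl
    · simp [hij.le, hij.not_ge]⟩
  map_add' _ _ := rfl
  map_smul' _ _ := rfl
  left_inv S := by
    ext i j
    by_cases h : i ≤ j
    · simp [h]
    · simpa [h] using S.2.apply i j
  right_inv v := by
    ext p
    simp [p.2]

theorem det_symmetricCongr_diagonal (δ : ι → K) :
    (symmetricCongr (diagonal δ)).det = (∏ i, δ i) ^ (Fintype.card ι + 1) := by
  let e := symmetricMatrices.upperCoords (ι := ι) (K := K)
  have hconj : e.toLinearMap ∘ₗ symmetricCongr (diagonal δ) ∘ₗ e.symm.toLinearMap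
      = toLin' (diagonal fun p => δ p.1.1 * δ p.1.2) := by
    refine LinearMap.ext fun v => funext fun p => ?_
    have hv : (e.symm v : Matrix ι ι K) p.1.1 p.1.2 = v p := dif_pos p.2
    change ((diagonal δ)ᵀ * (e.symm v : Matrix ι ι K) * diagonal δ) p.1.1 p.1.2 = _
    rw [diagonal_transpose, mul_diagonal, diagonal_mul, toLin'_apply, mulVec_diagonal, hv,
      mul_right_comm]
  rw [← LinearMap.det_conj _ e, hconj, LinearMap.det_toLin', det_diagonal,
    prod_subtype_le_mul_eq_pow]

theorem det_symmetricCongr (c : Matrix ι ι K) :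
    (symmetricCongr c).det = c.det ^ (Fintype.card ι + 1) := by
  induction c using diagonal_transvection_induction with
  | hdiag δ _ => rw [det_symmetricCongr_diagonal, det_diagonal]
  | htransvec t => rw [det_symmetricCongr_transvection, t.det, one_pow]
  | hmul A B hA hB =>
    rw [symmetricCongr_mul, LinearMap.det_comp, hA, hB, det_mul, mul_pow, mul_comm]

end Symmetric

end Matrix

theorem Kmat_eq_permMatrix (l : ℕ) :
    Kmat l = (Fin.revPerm : Equiv.Perm (Fin l)).permMatrix ℂ := by
  ext i j
  simp only [Kmat, Equiv.Perm.permMatrix, PEquiv.toMatrix_apply, Equiv.toPEquiv_apply,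
    Option.mem_def, Option.some.injEq, Fin.revPerm_apply, Fin.ext_iff, Fin.val_rev]
  exact if_congr (by omega) rfl rfl

theorem Kmat_transpose (l : ℕ) : (Kmat l)ᵀ = Kmat l := by
  rw [Kmat_eq_permMatrix, transpose_permMatrix, Equiv.Perm.inv_def, Fin.revPerm_symm]

theorem Kmat_mul_Kmat (l : ℕ) : Kmat l * Kmat l = 1 := by
  have hrev : Fin.revPerm * Fin.revPerm = (1 : Equiv.Perm (Fin l)) := Equiv.ext Fin.rev_rev
  rw [Kmat_eq_permMatrix, ← permMatrix_mul, hrev, permMatrix_one]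

theorem Kmat_mul_Kmat_mul (l : ℕ) (B : Matrix (Fin l) (Fin l) ℂ) : Kmat l * (Kmat l * B) = B := by
  rw [← Matrix.mul_assoc, Kmat_mul_Kmat, Matrix.one_mul]

noncomputable def WsubEquivSymmetricMatrices (l : ℕ) :
    Wsub l ≃ₗ[ℂ] symmetricMatrices (Fin l) ℂ where
  toFun G := ⟨Kmat l * (G : Matrix (Fin l) (Fin l) ℂ), by
    change (Kmat l * (G : Matrix (Fin l) (Fin l) ℂ))ᵀ = Kmat l * G
    rw [transpose_mul, Kmat_transpose, G.2]⟩
  invFun S := ⟨Kmat l * (S : Matrix (Fin l) (Fin l) ℂ), by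
    change Kmat l * (Kmat l * (S : Matrix (Fin l) (Fin l) ℂ))
      = (Kmat l * (S : Matrix (Fin l) (Fin l) ℂ))ᵀ * Kmat l
    rw [Kmat_mul_Kmat_mul, transpose_mul, Kmat_transpose, S.2.eq, Matrix.mul_assoc, Kmat_mul_Kmat,
      Matrix.mul_one]⟩
  map_add' _ _ := Subtype.ext (Matrix.mul_add _ _ _)
  map_smul' _ _ := Subtype.ext (Matrix.mul_smul _ _ _)
  left_inv G := Subtype.ext (Kmat_mul_Kmat_mul l G)
  right_inv S := Subtype.ext (Kmat_mul_Kmat_mul l S)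

theorem det_adjoint_action_symplectic_parabolic_general
    (n l : ℕ)
    (a : Matrix (Fin l) (Fin l) ℂ)
    (b : Matrix (Fin l) (Fin (2 * n - 2 * l)) ℂ)
    (d : Matrix (Fin (2 * n - 2 * l)) (Fin (2 * n - 2 * l)) ℂ)
    (f : (Matrix (Fin (2 * n - 2 * l)) (Fin l) ℂ × Wsub l) →ₗ[ℂ]
         (Matrix (Fin (2 * n - 2 * l)) (Fin l) ℂ × Wsub l))
    (hf : ∀ (D : Matrix (Fin (2 * n - 2 * l)) (Fin l) ℂ) (G : Wsub l),
      (f (D, G)).1 =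
        d * D * a⁻¹ -
          Mmat (2 * n - 2 * l) * (d⁻¹)ᵀ * bᵀ * (a⁻¹)ᵀ * Kmat l *
            (G : Matrix (Fin l) (Fin l) ℂ) * a⁻¹ ∧
      (((f (D, G)).2 : Matrix (Fin l) (Fin l) ℂ)) =
        Kmat l * (a⁻¹)ᵀ * Kmat l * (G : Matrix (Fin l) (Fin l) ℂ) * a⁻¹) :
    LinearMap.det f = (a.det)⁻¹ ^ (2 * n - 2 * l) * d.det ^ l * (a.det)⁻¹ ^ (l + 1) ∧
    (l = n → LinearMap.det f = (a.det)⁻¹ ^ (n + 1)) := by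
  let e := WsubEquivSymmetricMatrices l
  have hlower : LinearMap.snd ℂ _ _ ∘ₗ f ∘ₗ LinearMap.inl ℂ _ _ = 0 :=
    LinearMap.ext fun D => Subtype.ext <| by simpa using (hf D 0).2
  have hupper : LinearMap.fst ℂ _ _ ∘ₗ f ∘ₗ LinearMap.inl ℂ _ _ = mulLeftRight d a⁻¹ :=
    LinearMap.ext fun D => (by simpa using (hf D 0).1 : (f (D, 0)).1 = d * D * a⁻¹)
  have hW : e.toLinearMap ∘ₗ (LinearMap.snd ℂ _ _ ∘ₗ f ∘ₗ LinearMap.inr ℂ _ _) ∘ₗ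
      e.symm.toLinearMap = symmetricCongr a⁻¹ := by
    refine LinearMap.ext fun S => Subtype.ext ?_
    change Kmat l * (f (0, e.symm S)).2 = (a⁻¹)ᵀ * S * a⁻¹
    rw [(hf 0 (e.symm S)).2]
    change Kmat l * (Kmat l * (a⁻¹)ᵀ * Kmat l * (Kmat l * S) * a⁻¹) = _
    simp only [Matrix.mul_assoc, Kmat_mul_Kmat_mul]
  have hdet : LinearMap.det f = (a.det)⁻¹ ^ (2 * n - 2 * l) * d.det ^ l * (a.det)⁻¹ ^ (l + 1) := by
    rw [LinearMap.det_eq_mul_of_snd_comp_inl_eq_zero f hlower, hupper,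
      ← LinearMap.det_conj _ e, hW, det_mulLeftRight, det_symmetricCongr, det_nonsing_inv,
      Ring.inverse_eq_inv, Fintype.card_fin, Fintype.card_fin]
    ring
  refine ⟨hdet, fun hl => ?_⟩
  subst hl
  have : IsEmpty (Fin (2 * l - 2 * l)) := by rw [Nat.sub_self]; infer_instance
  rw [hdet, det_isEmpty (A := d)]
  simp

/-- In `Sp(2n, ℂ)` (defined by the antidiagonal symplectic form `M_{2n}`),
let `P_I` be the standard maximal parabolic corresponding to an isotropic subspace of
dimension `l` (`1 ≤ l ≤ n`).  The quotient `Lie(Sp(2n,ℂ))/Lie(P_I)` is identified with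
`Mat((2n-2l)×l, ℂ) ⊕ W`, `W = {B : K_l B = Bᵀ K_l}`, and the adjoint action of an element
`M_{a,b,c,d}` of `P_I` with Levi data `a ∈ GL(l,ℂ)`, `d ∈ Sp(2n-2l,ℂ)` sends `(D, G)` to
`(d D a⁻¹ - M_{2n-2l} (d⁻¹)ᵀ bᵀ (a⁻¹)ᵀ K_l G a⁻¹, K_l (a⁻¹)ᵀ K_l G a⁻¹)`.  Its determinant
equals `det(a)^{-(2n-2l)} · det(d)^l · det(a)^{-(l+1)}`; in particular, in the Lagrangian
case `l = n` it equals `det(a)^{-(n+1)}`. -/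
theorem det_adjoint_action_symplectic_parabolic
    (n l : ℕ) (hl : 1 ≤ l) (hln : l ≤ n)
    (a : Matrix (Fin l) (Fin l) ℂ) (ha : IsUnit a.det)
    (b : Matrix (Fin l) (Fin (2 * n - 2 * l)) ℂ)
    (d : Matrix (Fin (2 * n - 2 * l)) (Fin (2 * n - 2 * l)) ℂ)
    (hd : dᵀ * Mmat (2 * n - 2 * l) * d = Mmat (2 * n - 2 * l))
    (f : (Matrix (Fin (2 * n - 2 * l)) (Fin l) ℂ × Wsub l) →ₗ[ℂ]
         (Matrix (Fin (2 * n - 2 * l)) (Fin l) ℂ × Wsub l))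
    (hf : ∀ (D : Matrix (Fin (2 * n - 2 * l)) (Fin l) ℂ) (G : Wsub l),
      (f (D, G)).1 =
        d * D * a⁻¹ -
          Mmat (2 * n - 2 * l) * (d⁻¹)ᵀ * bᵀ * (a⁻¹)ᵀ * Kmat l *
            (G : Matrix (Fin l) (Fin l) ℂ) * a⁻¹ ∧
      (((f (D, G)).2 : Matrix (Fin l) (Fin l) ℂ)) =
        Kmat l * (a⁻¹)ᵀ * Kmat l * (G : Matrix (Fin l) (Fin l) ℂ) * a⁻¹) :
    LinearMap.det f = (a.det)⁻¹ ^ (2 * n - 2 * l) * d.det ^ l * (a.det)⁻¹ ^ (l + 1) ∧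
    (l = n → LinearMap.det f = (a.det)⁻¹ ^ (n + 1)) :=
  det_adjoint_action_symplectic_parabolic_general n l a b d f hf
end

section
/- The linear endomorphism of the space of skew-symmetric l×l complex matrices given by S ↦ (a^{-1})^T S a^{-1}, for a ∈ GL(l,ℂ), has determinant det(a)^{-(l-1)}. -/
/-!
The map `b ↦ det (S ↦ bᵀ S b)` is multiplicative, so by the decomposition of any matrix into
transvections and a diagonal matrix it suffices to evaluate it on those. The diagonal matrix
`diag d` scales the basis vector `E i j - E j i` (`i < j`) of skew matrices by `d i * d j`, and
`∏_{i<j} d i d j = (∏ i, d i) ^ (l - 1)`. Any multiplicative `χ` with values in a field of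
characteristic `≠ 2` is `1` on a transvection `t`: conjugating `t` by `diag (2, 1, …, 1)` gives
`t ^ 2`, so `χ t = χ t ^ 2`.
-/

open Matrix

/-- The subspace of skew-symmetric `l × l` complex matrices. -/
noncomputable def SkewSub (l : ℕ) : Submodule ℂ (Matrix (Fin l) (Fin l) ℂ) where
  carrier := {S | Sᵀ = -S}
  add_mem' := by
    intro a b ha hb
    simp only [Set.mem_setOf_eq] at *
    rw [Matrix.transpose_add, ha, hb, neg_add]
  zero_mem' := by simp
  smul_mem' := by
    intro c a ha
    simp only [Set.mem_setOf_eq] at *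
    rw [Matrix.transpose_smul, ha, smul_neg]

theorem LinearMap.det_eq_prod_of_apply_basis {R M ι : Type*} [CommRing R] [AddCommGroup M]
    [Module R M] [Fintype ι] [DecidableEq ι] (b : Module.Basis ι R M) (f : M →ₗ[R] M)
    (c : ι → R) (hf : ∀ i, f (b i) = c i • b i) : LinearMap.det f = ∏ i, c i := by
  rw [← LinearMap.det_toMatrix b, show toMatrix b b f = diagonal c from ?_, det_diagonal]
  ext i j
  rw [toMatrix_apply, hf, map_smul, b.repr_self, Finsupp.smul_single_one, Finsupp.single_apply,
    diagonal_apply]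
  grind

theorem Fin.prod_lt_pairs_mul {M : Type*} [CommMonoid M] {l : ℕ} (d : Fin l → M) :
    ∏ p : {p : Fin l × Fin l // p.1 < p.2}, d p.1.1 * d p.1.2 = (∏ i, d i) ^ (l - 1) := by
  rw [← Finset.prod_subtype (Finset.univ.filter fun p : Fin l × Fin l => p.1 < p.2) (by simp)
      fun p => d p.1 * d p.2,
    Finset.prod_mul_distrib, Finset.prod_filter, Finset.prod_filter, Fintype.prod_prod_type,
    Fintype.prod_prod_type, Finset.prod_comm (f := fun i j => if i < j then d j else 1)]
  simp only [Finset.prod_ite, Finset.prod_const_one, mul_one, Finset.prod_const,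
    Finset.filter_lt_eq_Ioi, Finset.filter_gt_eq_Iio, Fin.card_Ioi, Fin.card_Iio,
    ← Finset.prod_mul_distrib, ← pow_add]
  rw [← Finset.prod_pow]
  exact Finset.prod_congr rfl fun i _ => congrArg _ (by omega)

theorem Matrix.diagonal_mul_single {n R : Type*} [Fintype n] [DecidableEq n] [Semiring R]
    (d : n → R) (i j : n) (c : R) : diagonal d * single i j c = single i j (d i * c) := by
  ext a b
  simp only [diagonal_mul, single_apply]
  grind

theorem Matrix.single_mul_diagonal {n R : Type*} [Fintype n] [DecidableEq n] [Semiring R]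
    (d : n → R) (i j : n) (c : R) : single i j c * diagonal d = single i j (c * d j) := by
  ext a b
  simp only [mul_diagonal, single_apply]
  grind

theorem Matrix.diagonal_mul_transvection {n R : Type*} [Fintype n] [DecidableEq n] [CommRing R]
    (d : n → R) (i j : n) (c : R) :
    diagonal d * transvection i j (d j * c) = transvection i j (d i * c) * diagonal d := by
  rw [transvection, transvection, Matrix.mul_add, Matrix.add_mul, diagonal_mul_single,
    single_mul_diagonal, Matrix.mul_one, Matrix.one_mul]
  ring_nf

section MatrixCharacter

variable {K n : Type*} [Field K] [Fintype n] [DecidableEq n]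

theorem MonoidHom.map_transvection_eq_one [NeZero (2 : K)] (χ : Matrix n n K →* K) {i j : n}
    (hij : i ≠ j) (c : K) : χ (transvection i j c) = 1 := by
  set t := transvection i j c
  set D : Matrix n n K := diagonal (Function.update 1 i 2)
  have hD : IsUnit D := isUnit_diagonal.mpr <| by
    simp [Pi.isUnit_iff, Function.update_apply, apply_ite, two_ne_zero]
  have ht : IsUnit t := (isUnit_iff_isUnit_det t).mpr <| by
    simp [t, det_transvection_of_ne _ _ hij]
  have hconj : D * t = t * t * D := by
    have := diagonal_mul_transvection (Function.update 1 i 2) i j c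
    rwa [Function.update_self, Function.update_of_ne hij.symm, Pi.one_apply, one_mul, two_mul,
      ← transvection_mul_transvection_same _ _ hij] at this
  have h := congrArg χ hconj
  simp only [map_mul] at h
  apply mul_left_cancel₀ (mul_ne_zero (hD.map χ).ne_zero (ht.map χ).ne_zero)
  linear_combination -h

theorem MonoidHom.apply_eq_det_pow_of_apply_diagonal [NeZero (2 : K)] (χ : Matrix n n K →* K)
    (k : ℕ) (hdiag : ∀ d : n → K, χ (diagonal d) = (∏ i, d i) ^ k) (M : Matrix n n K) :
    χ M = M.det ^ k := by
  apply diagonal_transvection_induction (fun M => χ M = M.det ^ k) M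
  · intro d _
    rw [hdiag, det_diagonal]
  · intro t
    rw [t.det, one_pow]
    exact χ.map_transvection_eq_one t.hij t.c
  · intro A B hA hB
    rw [map_mul, hA, hB, det_mul, mul_pow]

end MatrixCharacter

namespace SkewSub

variable {l : ℕ}

theorem mem_iff {S : Matrix (Fin l) (Fin l) ℂ} : S ∈ SkewSub l ↔ Sᵀ = -S := Iff.rfl

theorem apply_swap {S : Matrix (Fin l) (Fin l) ℂ} (hS : S ∈ SkewSub l) (i j : Fin l) :
    S j i = -S i j := by
  simpa using congrFun (congrFun hS i) j

theorem apply_self {S : Matrix (Fin l) (Fin l) ℂ} (hS : S ∈ SkewSub l) (i : Fin l) :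
    S i i = 0 :=
  self_eq_neg.mp (apply_swap hS i i)

noncomputable def congrAction (b : Matrix (Fin l) (Fin l) ℂ) : SkewSub l →ₗ[ℂ] SkewSub l :=
  (LinearMap.mulLeftRight ℂ (bᵀ, b)).restrict fun S hS => by
    rw [mem_iff] at hS ⊢
    simp [transpose_mul, Matrix.mul_assoc, hS]

@[simp]
theorem coe_congrAction (b : Matrix (Fin l) (Fin l) ℂ) (S : SkewSub l) :
    (congrAction b S : Matrix (Fin l) (Fin l) ℂ) = bᵀ * S * b :=
  rfl

theorem congrAction_one : congrAction (1 : Matrix (Fin l) (Fin l) ℂ) = LinearMap.id := by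
  ext S : 2
  simp

theorem congrAction_mul (M N : Matrix (Fin l) (Fin l) ℂ) :
    congrAction (M * N) = congrAction N ∘ₗ congrAction M := by
  ext S : 2
  simp [transpose_mul, Matrix.mul_assoc]

noncomputable def detCongrAction (l : ℕ) : Matrix (Fin l) (Fin l) ℂ →* ℂ where
  toFun b := LinearMap.det (congrAction b)
  map_one' := by rw [congrAction_one, LinearMap.det_id]
  map_mul' M N := by rw [congrAction_mul, LinearMap.det_comp, mul_comm]

abbrev UpperPairs (l : ℕ) := {p : Fin l × Fin l // p.1 < p.2}

noncomputable def ofUpper : (UpperPairs l → ℂ) →ₗ[ℂ] Matrix (Fin l) (Fin l) ℂ where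
  toFun v := of fun i j =>
    if h : i < j then v ⟨(i, j), h⟩ else if h : j < i then -v ⟨(j, i), h⟩ else 0
  map_add' v w := by
    ext i j
    simp only [of_apply, Matrix.add_apply, Pi.add_apply]
    split_ifs <;> ring
  map_smul' c v := by
    ext i j
    simp only [of_apply, Matrix.smul_apply, Pi.smul_apply, smul_eq_mul, RingHom.id_apply]
    split_ifs <;> ring

theorem ofUpper_apply_of_lt (v : UpperPairs l → ℂ) {i j : Fin l} (h : i < j) :
    ofUpper v i j = v ⟨(i, j), h⟩ := by
  simp [ofUpper, h]

theorem ofUpper_mem (v : UpperPairs l → ℂ) : ofUpper v ∈ SkewSub l := by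
  ext i j
  simp only [ofUpper, LinearMap.coe_mk, AddHom.coe_mk, transpose_apply, of_apply]
  rcases lt_trichotomy i j with h | rfl | h
  · simp [h, asymm h]
  · simp
  · simp [h, asymm h]

theorem ofUpper_restrict {S : Matrix (Fin l) (Fin l) ℂ} (hS : S ∈ SkewSub l) :
    ofUpper (fun p : UpperPairs l => S p.1.1 p.1.2) = S := by
  ext i j
  simp only [ofUpper, LinearMap.coe_mk, AddHom.coe_mk, of_apply]
  rcases lt_trichotomy i j with h | rfl | h
  · simp [h]
  · simp [apply_self hS]
  · simp [h, asymm h, apply_swap hS j i]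

theorem transpose_diagonal_mul_ofUpper_mul_diagonal (d : Fin l → ℂ) (v : UpperPairs l → ℂ) :
    (diagonal d)ᵀ * ofUpper v * diagonal d = ofUpper fun p => d p.1.1 * d p.1.2 * v p := by
  ext i j
  simp only [ofUpper, LinearMap.coe_mk, AddHom.coe_mk, diagonal_transpose, diagonal_mul,
    mul_diagonal, of_apply]
  split_ifs <;> ring

noncomputable def upperEquiv (l : ℕ) : (UpperPairs l → ℂ) ≃ₗ[ℂ] SkewSub l where
  __ := ofUpper.codRestrict (SkewSub l) ofUpper_mem
  invFun S p := (S : Matrix (Fin l) (Fin l) ℂ) p.1.1 p.1.2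
  left_inv v := funext fun p => ofUpper_apply_of_lt v p.2
  right_inv S := Subtype.ext (ofUpper_restrict S.2)

noncomputable def upperBasis (l : ℕ) : Module.Basis (UpperPairs l) ℂ (SkewSub l) :=
  (Pi.basisFun ℂ (UpperPairs l)).map (upperEquiv l)

theorem coe_upperBasis (p : UpperPairs l) :
    (upperBasis l p : Matrix (Fin l) (Fin l) ℂ) = ofUpper (Pi.single p 1) := by
  simp [upperBasis, upperEquiv]

theorem congrAction_diagonal_upperBasis (d : Fin l → ℂ) (p : UpperPairs l) :
    congrAction (diagonal d) (upperBasis l p) = (d p.1.1 * d p.1.2) • upperBasis l p := by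
  ext1
  rw [coe_congrAction, coe_upperBasis, transpose_diagonal_mul_ofUpper_mul_diagonal,
    Submodule.coe_smul, coe_upperBasis, ← map_smul]
  congr 1
  ext q
  rcases eq_or_ne q p with rfl | h <;> simp [*]

theorem detCongrAction_diagonal (d : Fin l → ℂ) :
    detCongrAction l (diagonal d) = (∏ i, d i) ^ (l - 1) :=
  (LinearMap.det_eq_prod_of_apply_basis (upperBasis l) _ _
    (congrAction_diagonal_upperBasis d)).trans (Fin.prod_lt_pairs_mul d)

theorem det_congrAction (M : Matrix (Fin l) (Fin l) ℂ) :
    LinearMap.det (congrAction M) = M.det ^ (l - 1) :=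
  (detCongrAction l).apply_eq_det_pow_of_apply_diagonal (l - 1) detCongrAction_diagonal M

end SkewSub

theorem det_congr_action_on_skew_general (l : ℕ)
    (a : Matrix (Fin l) (Fin l) ℂ)
    (f : (SkewSub l) →ₗ[ℂ] (SkewSub l))
    (hf : ∀ S : SkewSub l,
      ((f S : Matrix (Fin l) (Fin l) ℂ)) =
        (a⁻¹)ᵀ * (S : Matrix (Fin l) (Fin l) ℂ) * a⁻¹) :
    LinearMap.det f = (a.det)⁻¹ ^ (l - 1) := by
  have hfa : f = SkewSub.congrAction a⁻¹ := LinearMap.ext fun S => Subtype.ext (hf S)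
  rw [hfa, SkewSub.det_congrAction, det_nonsing_inv, Ring.inverse_eq_inv']

/-- For `a ∈ GL(l, ℂ)`, the linear endomorphism of the space of
skew-symmetric `l × l` complex matrices given by `S ↦ (a⁻¹)ᵀ S a⁻¹` has determinant
`det(a)^{-(l-1)}`. -/
theorem det_congr_action_on_skew (l : ℕ)
    (a : Matrix (Fin l) (Fin l) ℂ) (ha : IsUnit a.det)
    (f : (SkewSub l) →ₗ[ℂ] (SkewSub l))
    (hf : ∀ S : SkewSub l,
      ((f S : Matrix (Fin l) (Fin l) ℂ)) =
        (a⁻¹)ᵀ * (S : Matrix (Fin l) (Fin l) ℂ) * a⁻¹) :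
    LinearMap.det f = (a.det)⁻¹ ^ (l - 1) :=
  det_congr_action_on_skew_general l a f hf
end
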